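/- arXiv:1012.4713 — 3 statements merged into one kernel-verified Lean document; each statement's English description precedes it below -/
import Mathlib

section
/- Let g be a Lie algebra with R : g → g a linear map satisfying the modified classical Yang-Baxter equation [R(X),R(Y)] - R([R(X),Y] + [X,R(Y)]) = λ[X,Y] for some scalar λ. Then the bracket [X,Y]_R := [R(X),Y] + [X,R(Y)] defines a Lie algebra structure on the underlying vector space of g (it is bilinear, antisymmetric, and satisfies the Jacobi identity). -/
/-- The `R`-bracket `[X,Y]_R = [R X, Y] + [X, R Y]`. -/
def rBracket {K : Type*} [Field K] {L : Type*} [LieRing L] [LieAlgebra K L]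
    (R : L →ₗ[K] L) (X Y : L) : L :=
  ⁅R X, Y⁆ + ⁅X, R Y⁆

/-- If `R` is a linear endomorphism of a Lie algebra `g` over a field of
characteristic zero satisfying the modified classical Yang–Baxter equation
`[R X, R Y] - R([R X, Y] + [X, R Y]) = λ [X, Y]`, then the bracket
`[X,Y]_R := [R X, Y] + [X, R Y]` is a Lie bracket: it is bilinear, antisymmetric and
satisfies the Jacobi identity. -/
theorem stmt_4
    (K : Type*) [Field K] [CharZero K]
    (L : Type*) [LieRing L] [LieAlgebra K L]
    (R : L →ₗ[K] L) (lam : K)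
    (hmYBE : ∀ X Y : L, ⁅R X, R Y⁆ - R (⁅R X, Y⁆ + ⁅X, R Y⁆) = lam • ⁅X, Y⁆) :
    (∀ (a : K) (X X' Y : L),
      rBracket R (a • X + X') Y = a • rBracket R X Y + rBracket R X' Y) ∧
    (∀ (a : K) (X Y Y' : L),
      rBracket R X (a • Y + Y') = a • rBracket R X Y + rBracket R X Y') ∧
    (∀ X Y : L, rBracket R X Y = -rBracket R Y X) ∧
    (∀ X Y Z : L,
      rBracket R X (rBracket R Y Z) + rBracket R Y (rBracket R Z X) +
        rBracket R Z (rBracket R X Y) = 0) := by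
  have hR : ∀ X Y : L, R (⁅R X, Y⁆ + ⁅X, R Y⁆) = ⁅R X, R Y⁆ - lam • ⁅X, Y⁆ := by
    intro X Y
    have := hmYBE X Y
    linear_combination (norm := module) -this
  refine ⟨?_, ?_, ?_, ?_⟩
  · intro a X X' Y
    simp only [rBracket, map_add, map_smul, add_lie, lie_add, smul_lie, lie_smul,
      smul_add]
    abel
  · intro a X Y Y'
    simp only [rBracket, map_add, map_smul, add_lie, lie_add, smul_lie, lie_smul,
      smul_add]
    abel
  · intro X Y
    simp only [rBracket]
    rw [← lie_skew (R Y) X, ← lie_skew Y (R X)]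
    abel
  · intro X Y Z
    simp only [rBracket]
    rw [hR, hR, hR]
    have h1 := lie_jacobi (R X) (R Y) Z
    have h2 := lie_jacobi (R Y) (R Z) X
    have h3 := lie_jacobi (R Z) (R X) Y
    have h4 := lie_jacobi X Y Z
    simp only [lie_add, lie_sub, lie_smul] at *
    linear_combination (norm := module) h1 + h2 + h3 - lam • h4
end

section
/- Consider the superalgebra psu(1,1|2) realized by 4×4 supermatrices M with M* = -M (where M* = ΣM†Σ), and the order-four automorphism Ω(M) = -K Mˢᵗ K. Then Ω⁴ = identity and the fixed subalgebra f₀ of Ω (eigenvalue +1) intersected with the (-1)-eigenspace kernel of ad(Λ), for Λ = (i/2)(h₁ + h₃), is zero: f₀⊥ = {0}. -/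
noncomputable section

open Matrix

/-- `Σ = diag(σ, I)` with `σ = diag(1,-1)`. -/
def SigMat : Matrix (Fin 4) (Fin 4) ℂ := Matrix.diagonal ![1, -1, 1, 1]

/-- `K = diag(σ, σ)`. -/
def KMat : Matrix (Fin 4) (Fin 4) ℂ := Matrix.diagonal ![1, -1, 1, -1]

/-- super-transpose `Mˢᵗ = [[Aᵗ, -Yᵗ],[Xᵗ, Bᵗ]]`. -/
def superT (M : Matrix (Fin 4) (Fin 4) ℂ) : Matrix (Fin 4) (Fin 4) ℂ :=
  Matrix.of fun i j => (if (i : ℕ) < 2 ∧ 2 ≤ (j : ℕ) then (-1 : ℂ) else 1) * M j i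

/-- super-Hermitian conjugate `M† = [[A†, -iY†],[-iX†, B†]]`. -/
def superDag (M : Matrix (Fin 4) (Fin 4) ℂ) : Matrix (Fin 4) (Fin 4) ℂ :=
  Matrix.of fun i j =>
    (if ((i : ℕ) < 2 ∧ 2 ≤ (j : ℕ)) ∨ (2 ≤ (i : ℕ) ∧ (j : ℕ) < 2) then -Complex.I else 1) *
      (starRingEnd ℂ) (M j i)

/-- the order four automorphism `Ω(M) = -K Mˢᵗ K`. -/
def OmegaMap (M : Matrix (Fin 4) (Fin 4) ℂ) : Matrix (Fin 4) (Fin 4) ℂ :=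
  -(KMat * superT M * KMat)

/-- `Λ = (i/2)(h₁ + h₃) = (i/2) diag(1,-1,1,-1)`. -/
def LambdaMat : Matrix (Fin 4) (Fin 4) ℂ := (Complex.I / 2) • KMat

lemma omega_apply (M : Matrix (Fin 4) (Fin 4) ℂ) (i j : Fin 4) :
    OmegaMap M i j =
      -(KMat i i * ((if (i : ℕ) < 2 ∧ 2 ≤ (j : ℕ) then (-1 : ℂ) else 1) * M j i) * KMat j j) := by
  simp [OmegaMap, KMat, superT, Matrix.diagonal_mul, Matrix.mul_diagonal,
    Matrix.diagonal_apply_eq]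

/-- In the supermatrix realization of `psu(1,1|2)` (matrices `M` with
`Σ M† Σ = -M`), the automorphism `Ω(M) = -K Mˢᵗ K` satisfies `Ω⁴ = id`, and the
centralizer of `Λ = (i/2)(h₁+h₃)` inside the fixed (grade-zero) subalgebra of `Ω` is
zero: `f₀⊥ = {0}`. -/
theorem stmt_8 :
    (∀ M : Matrix (Fin 4) (Fin 4) ℂ, OmegaMap (OmegaMap (OmegaMap (OmegaMap M))) = M) ∧
    (∀ M : Matrix (Fin 4) (Fin 4) ℂ,
      SigMat * superDag M * SigMat = -M →
      OmegaMap M = M →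
      M * LambdaMat = LambdaMat * M →
      M = 0) := by
  constructor
  · intro M
    ext i j
    rw [omega_apply, omega_apply, omega_apply, omega_apply]
    fin_cases i <;> fin_cases j <;> simp [KMat]
  · intro M _ h2 h3
    have key : M * KMat = KMat * M := by
      rw [LambdaMat, Matrix.mul_smul, Matrix.smul_mul] at h3
      have hne : (Complex.I / 2 : ℂ) ≠ 0 := by simp [Complex.I_ne_zero]
      exact smul_right_injective _ hne h3
    have hc : ∀ i j : Fin 4, M i j * KMat j j = KMat i i * M i j := by
      intro i j
      simpa [Matrix.mul_diagonal, Matrix.diagonal_mul, KMat, Matrix.diagonal_apply_eq] using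
        (by rw [key] : (M * KMat) i j = (KMat * M) i j)
    have hf : ∀ i j : Fin 4, OmegaMap M i j = M i j := fun i j => by rw [h2]
    simp only [omega_apply] at hf
    ext i j
    have h1 := hf i j
    have h2' := hf j i
    have h3' := hc i j
    clear hf hc key h2 h3
    fin_cases i <;> fin_cases j <;> simp [KMat] at h1 h2' h3' ⊢ <;>
      first
      | linear_combination (-(1:ℂ)/2) * h3'
      | linear_combination (-(1:ℂ)/2) * h1
      | linear_combination (-(1:ℂ)/2) * (h1 + h2')
      | linear_combination (-(1:ℂ)/2) * (h1 - h2')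
      | linear_combination ((1:ℂ)/2) * h3'
end
end

section
/- Given the supersymmetry variations δ₊½ acting on fields by δ₊½ψ₊^(+1/2) = [(∂₊BB⁻¹)∥, D^(+1/2)], δ₊½ψ₋^(-1/2) = -[Λ₋^(-1), B⁻¹D^(+1/2)B], and (δ₊½BB⁻¹)∥ = [ψ^(-1/2), D^(+1/2)], together with the analogous δ₋½ variations, the commutator of two δ₊½ flows closes on translations: [δ₊½, δ'₊½] = 2(ε·ε')∂₊ and [δ₋½, δ'₋½] = 2(ε̄·ε̄')∂₋ on-shell (using the fermion equations of motion), while [δ₊½, δ₋½] = δ_H is a gauge transformation with parameter ω = [D^(+1/2), D^(-1/2)] ∈ K_B^(0). -/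
/-!
In the perturbative limit every supersymmetry variation is a bracket with a constant
parameter, so the commutator of two variations acts on a field through an antisymmetrised
double bracket. The Jacobi identity collapses it to a single bracket with `[D, D']`,
`[D̄, D̄']` or `[D, D̄] = ω`. For equal chiralities `[D, D']` is a central multiple of `Λ±`,
and `ψ = [χ, Λ]` together with the fermion equations of motion identifies the result with a
light-cone derivative of the field. For opposite chiralities `Λ±` commutes with the
parameters, so `ad Λ±` passes through them and the result is the gauge rotation by `ω`.
-/

noncomputable section

namespace Stmt17

/-- commutator in the (Grassmann-enveloped) superalgebra. -/
def cm {R : Type*} [Ring R] (X Y : R) : R := X * Y - Y * X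

/-- light-cone directional derivative on `ℝ²` (coordinates `(x⁺, x⁻)`). -/
def pd {R : Type*} [NormedRing R] [NormedAlgebra ℝ R]
    (v : ℝ × ℝ) (f : ℝ × ℝ → R) (x : ℝ × ℝ) : R :=
  fderiv ℝ f x v

section Ring

variable {R : Type*} [Ring R]

lemma cm_neg_left (X Y : R) : cm (-X) Y = -cm X Y := by
  simp only [cm]; noncomm_ring

lemma cm_neg_right (X Y : R) : cm X (-Y) = -cm X Y := by
  simp only [cm]; noncomm_ring

lemma cm_sub_right (X Y Z : R) : cm X (Y - Z) = cm X Y - cm X Z := by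
  simp only [cm]; noncomm_ring

lemma cm_comm (X Y : R) : cm X Y = -cm Y X := by
  simp only [cm]; noncomm_ring

lemma cm_cm_sub_cm_cm (a X Y : R) : cm (cm a X) Y - cm (cm a Y) X = cm a (cm X Y) := by
  simp only [cm]; noncomm_ring

lemma cm_cm_of_cm_eq_zero {Λ X : R} (h : cm Λ X = 0) (a : R) :
    cm Λ (cm a X) = cm (cm Λ a) X := by
  have jacobi : cm Λ (cm a X) = cm (cm Λ a) X + cm a (cm Λ X) := by
    simp only [cm]; noncomm_ring
  rw [jacobi, h]
  simp [cm]

lemma cm_central_mul {s : R} (hs : ∀ x : R, s * x = x * s) (a Y : R) :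
    cm a (s * Y) = s * cm a Y := by
  simp only [cm, mul_sub, ← mul_assoc, hs a]

lemma cm_cm_sub_cm_cm_eq_cm (a X Y : R) : cm (cm a Y) X - cm (cm a X) Y = cm (cm X Y) a := by
  simp only [cm]; noncomm_ring

end Ring

section Algebra

variable {R : Type*} [NormedRing R] [NormedAlgebra ℝ R]

lemma cm_smul_central_mul {s : R} (hs : ∀ x : R, s * x = x * s) (a Y : R) (r : ℝ) :
    cm a (r • (s * Y)) = r • (s * cm a Y) := by
  rw [← cm_central_mul hs]
  simp only [cm, mul_smul_comm, smul_mul_assoc, smul_sub]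

lemma cm_cm_sub_cm_cm_of_cm_eq {X Y Λ s : R} {r : ℝ} (hs : ∀ x : R, s * x = x * s)
    (hXY : cm X Y = r • (s * Λ)) (a : R) :
    cm (cm a X) Y - cm (cm a Y) X = r • (s * cm a Λ) := by
  rw [cm_cm_sub_cm_cm, hXY, cm_smul_central_mul hs]

lemma pd_neg (f : ℝ × ℝ → R) (v x : ℝ × ℝ) : pd v (fun y => -f y) x = -pd v f x := by
  simp only [pd, fderiv_fun_neg, neg_apply]

lemma pd_cm_const {χ : ℝ × ℝ → R} {x : ℝ × ℝ} (hχ : DifferentiableAt ℝ χ x) (P : R)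
    (v : ℝ × ℝ) : pd v (fun y => cm (χ y) P) x = cm (pd v χ x) P := by
  simp only [pd, cm, fderiv_fun_sub (hχ.mul_const P) (hχ.const_mul P),
    fderiv_mul_const' hχ P, fderiv_const_mul hχ P]
  simp [smul_eq_mul]

end Algebra

/-- The variations are the linearisations at `B = 1 + b`:
`δ₊½(D)`: `δb = [χ⁻, D]`, `δψ₊ = [(∂₊b)∥, D]`, `δψ₋ = [Λ₋, [b, D]]`;
`δ₋½(D̄)`: `δb = -[χ⁺, D̄]`, `δψ₋ = -[(∂₋b)∥, D̄]`, `δψ₊ = [Λ₊, [b, D̄]]`.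
Here `s = ε·ε'` and `sb = ε̄·ε̄'`. -/
theorem stmt_17_general
    (R : Type*) [NormedRing R] [NormedAlgebra ℝ R]
    (par : R →ₗ[ℝ] R)                      -- projection onto Im(ad Λ)
    (Λp Λm D D' Db Db' s sb ω : R)
    -- ε·ε' and ε̄·ε̄' are central
    (hs : ∀ x : R, s * x = x * s) (hsb : ∀ x : R, sb * x = x * sb)
    -- the kernel superalgebra relations for the supersymmetry parameters
    (hDD' : cm D D' = (2 : ℝ) • (s * Λp))
    (hDbDb' : cm Db Db' = -((2 : ℝ) • (sb * Λm)))
    (hω : ω = cm D Db)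
    -- Λ± are central in the kernel: they commute with D, D', D̄, D̄' and ω
    (hk1 : cm Λp D = 0) (hk3 : cm Λp Db = 0)
    (hk5 : cm Λm D = 0) (hk7 : cm Λm Db = 0)
    -- fields: b (Toda), ψ± (fermions), χ∓ = ψ^(∓1/2) (dressing potentials)
    (ψp ψm χm χp : ℝ × ℝ → R)
    (hdχm : Differentiable ℝ χm)
    (hdχp : Differentiable ℝ χp)
    -- ψ±^(±1/2) = ±[ψ^(∓1/2), Λ±]
    (hψp : ∀ x, ψp x = cm (χm x) Λp)
    (hψm : ∀ x, ψm x = -cm (χp x) Λm)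
    -- the (linearized) fermion equations of motion
    (heom1 : ∀ x, pd (0, 1) ψp x = cm (ψm x) Λp)
    (heom2 : ∀ x, pd (1, 0) ψm x = cm Λm (ψp x))
    (heom3 : ∀ x, pd (1, 0) χp x = ψp x)
    (heom4 : ∀ x, pd (0, 1) χm x = ψm x)
    -- [Im(ad Λ), K] ⊆ Im(ad Λ): the projection `par` fixes brackets of the
    -- image-valued fields with the kernel parameters
    (hpar : ∀ (x : ℝ × ℝ) (v : ℝ × ℝ) (χ : ℝ × ℝ → R) (P : R),
      (χ = χm ∨ χ = χp) → P ∈ ({D, D', Db, Db'} : Set R) →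
      par (pd v (fun y => cm (χ y) P) x) = pd v (fun y => cm (χ y) P) x) :
    -- [δ₊½(D), δ₊½(D')] = 2(ε·ε')∂₊ on ψ₊ and on ψ₋
    (∀ x, cm (par (pd (1, 0) (fun y => cm (χm y) D) x)) D' -
        cm (par (pd (1, 0) (fun y => cm (χm y) D') x)) D =
      (2 : ℝ) • (s * pd (1, 0) ψp x)) ∧
    (∀ x, cm Λm (cm (cm (χm x) D) D') - cm Λm (cm (cm (χm x) D') D) =
      (2 : ℝ) • (s * pd (1, 0) ψm x)) ∧
    -- [δ₋½(D̄), δ₋½(D̄')] = 2(ε̄·ε̄')∂₋ on ψ₋ and on ψ₊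
    (∀ x, cm (par (pd (0, 1) (fun y => cm (χp y) Db) x)) Db' -
        cm (par (pd (0, 1) (fun y => cm (χp y) Db') x)) Db =
      (2 : ℝ) • (sb * pd (0, 1) ψm x)) ∧
    (∀ x, cm Λp (cm (-cm (χp x) Db) Db') - cm Λp (cm (-cm (χp x) Db') Db) =
      (2 : ℝ) • (sb * pd (0, 1) ψp x)) ∧
    -- [δ₊½(D), δ₋½(D̄)] = δ_H, the gauge transformation with parameter ω = [D, D̄]
    (∀ x, cm Λp (cm (cm (χm x) D) Db) -
        cm (par (pd (1, 0) (fun y => -cm (χp y) Db) x)) D =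
      cm ω (ψp x)) ∧
    (∀ x, -cm (par (pd (0, 1) (fun y => cm (χm y) D) x)) Db -
        cm Λm (cm (-cm (χp x) Db) D) =
      cm ω (ψm x)) := by
  have hψp' : ψp = fun y => cm (χm y) Λp := funext hψp
  have hψm' : ψm = fun y => cm (χp y) (-Λm) := funext fun x => by rw [hψm, cm_neg_right]
  have hDbDb'' : cm Db Db' = (2 : ℝ) • (sb * -Λm) := by rw [hDbDb', mul_neg, smul_neg]
  have hpar_m : ∀ x v P, P ∈ ({D, D', Db, Db'} : Set R) →
      par (pd v (fun y => cm (χm y) P) x) = cm (pd v χm x) P := fun x v P hP => by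
    rw [hpar x v χm P (.inl rfl) hP, pd_cm_const (hdχm x)]
  have hpar_p : ∀ x v P, P ∈ ({D, D', Db, Db'} : Set R) →
      par (pd v (fun y => cm (χp y) P) x) = cm (pd v χp x) P := fun x v P hP => by
    rw [hpar x v χp P (.inr rfl) hP, pd_cm_const (hdχp x)]
  refine ⟨fun x => ?_, fun x => ?_, fun x => ?_, fun x => ?_, fun x => ?_, fun x => ?_⟩
  · rw [hpar_m x _ D (by simp), hpar_m x _ D' (by simp), cm_cm_sub_cm_cm_of_cm_eq hs hDD',
      hψp', pd_cm_const (hdχm x)]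
  · rw [← cm_sub_right, cm_cm_sub_cm_cm_of_cm_eq hs hDD', cm_smul_central_mul hs,
      heom2, hψp]
  · rw [hpar_p x _ Db (by simp), hpar_p x _ Db' (by simp),
      cm_cm_sub_cm_cm_of_cm_eq hsb hDbDb'', hψm', pd_cm_const (hdχp x)]
  · rw [← cm_sub_right, ← cm_neg_left, ← cm_neg_left, cm_cm_sub_cm_cm_of_cm_eq hsb hDbDb'',
      cm_smul_central_mul hsb, heom1, hψm]
    simp only [cm_neg_left, cm_neg_right, neg_neg]
    rw [cm_comm Λp]
  · have hδψ : par (pd (1, 0) (fun y => -cm (χp y) Db) x) = -cm (ψp x) Db := by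
      rw [pd_neg, map_neg, hpar_p x _ Db (by simp), heom3]
    rw [hδψ, cm_cm_of_cm_eq_zero hk3, cm_cm_of_cm_eq_zero hk1, cm_comm Λp, ← hψp,
      cm_neg_left, cm_neg_left, cm_neg_left, sub_neg_eq_add, neg_add_eq_sub,
      cm_cm_sub_cm_cm_eq_cm, hω]
  · have hδψ : par (pd (0, 1) (fun y => cm (χm y) D) x) = cm (ψm x) D := by
      rw [hpar_m x _ D (by simp), heom4]
    rw [hδψ, cm_cm_of_cm_eq_zero hk5, cm_neg_right, cm_cm_of_cm_eq_zero hk7, cm_comm Λm,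
      ← hψm, cm_neg_left, sub_neg_eq_add, neg_add_eq_sub, cm_cm_sub_cm_cm_eq_cm, hω]

/-- On-shell closure of the supersymmetry flows of the Pohlmeyer reduced
models (in the perturbative limit `B = 1 + b`).  The variations
`δ₊½(D)`: `δb = [χ⁻, D]` (i.e. `(δB B⁻¹)∥ = [ψ^(-1/2), D^(+1/2)]`),
`δψ₊ = [(∂₊b)∥, D]`, `δψ₋ = [Λ₋, [b, D]]` (linearization of `-[Λ₋, B⁻¹DB]`), and
`δ₋½(D̄)`: `δb = -[χ⁺, D̄]`, `δψ₋ = -[(∂₋b)∥, D̄]`, `δψ₊ = [Λ₊, [b, D̄]]`,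
satisfy, using the fermion equations of motion:
`[δ₊½, δ'₊½] = 2(ε·ε') ∂₊` and `[δ₋½, δ'₋½] = 2(ε̄·ε̄') ∂₋` on the fields
`ψ₊^(+1/2), ψ₋^(-1/2)`, while `[δ₊½, δ₋½] = δ_H` is a gauge transformation with
parameter `ω = [D^(+1/2), D^(-1/2)] ∈ K_B⁽⁰⁾`.
Here `s = ε·ε'` and `sb = ε̄·ε̄'` are the central Grassmann-even bilinears, with
`[D, D'] = 2(ε·ε')Λ₊` and `[D̄, D̄'] = -2(ε̄·ε̄')Λ₋`. -/
theorem stmt_17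
    (R : Type*) [NormedRing R] [NormedAlgebra ℝ R]
    (par : R →ₗ[ℝ] R)                      -- projection onto Im(ad Λ)
    (Λp Λm D D' Db Db' s sb ω : R)
    -- ε·ε' and ε̄·ε̄' are central
    (hs : ∀ x : R, s * x = x * s) (hsb : ∀ x : R, sb * x = x * sb)
    -- the kernel superalgebra relations for the supersymmetry parameters
    (hDD' : cm D D' = (2 : ℝ) • (s * Λp))
    (hDbDb' : cm Db Db' = -((2 : ℝ) • (sb * Λm)))
    (hω : ω = cm D Db)
    -- Λ± are central in the kernel: they commute with D, D', D̄, D̄' and ω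
    (hk1 : cm Λp D = 0) (hk2 : cm Λp D' = 0) (hk3 : cm Λp Db = 0) (hk4 : cm Λp Db' = 0)
    (hk5 : cm Λm D = 0) (hk6 : cm Λm D' = 0) (hk7 : cm Λm Db = 0) (hk8 : cm Λm Db' = 0)
    (hk9 : cm Λp ω = 0) (hk10 : cm Λm ω = 0)
    -- fields: b (Toda), ψ± (fermions), χ∓ = ψ^(∓1/2) (dressing potentials)
    (b ψp ψm χm χp : ℝ × ℝ → R)
    (hdb : Differentiable ℝ b) (hdψp : Differentiable ℝ ψp)
    (hdψm : Differentiable ℝ ψm) (hdχm : Differentiable ℝ χm)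
    (hdχp : Differentiable ℝ χp)
    -- ψ±^(±1/2) = ±[ψ^(∓1/2), Λ±]
    (hψp : ∀ x, ψp x = cm (χm x) Λp)
    (hψm : ∀ x, ψm x = -cm (χp x) Λm)
    -- the (linearized) fermion equations of motion
    (heom1 : ∀ x, pd (0, 1) ψp x = cm (ψm x) Λp)
    (heom2 : ∀ x, pd (1, 0) ψm x = cm Λm (ψp x))
    (heom3 : ∀ x, pd (1, 0) χp x = ψp x)
    (heom4 : ∀ x, pd (0, 1) χm x = ψm x)
    -- [Im(ad Λ), K] ⊆ Im(ad Λ): the projection `par` fixes brackets of the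
    -- image-valued fields with the kernel parameters
    (hpar : ∀ (x : ℝ × ℝ) (v : ℝ × ℝ) (χ : ℝ × ℝ → R) (P : R),
      (χ = χm ∨ χ = χp) → P ∈ ({D, D', Db, Db'} : Set R) →
      par (pd v (fun y => cm (χ y) P) x) = pd v (fun y => cm (χ y) P) x) :
    -- [δ₊½(D), δ₊½(D')] = 2(ε·ε')∂₊ on ψ₊ and on ψ₋
    (∀ x, cm (par (pd (1, 0) (fun y => cm (χm y) D) x)) D' -
        cm (par (pd (1, 0) (fun y => cm (χm y) D') x)) D =
      (2 : ℝ) • (s * pd (1, 0) ψp x)) ∧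
    (∀ x, cm Λm (cm (cm (χm x) D) D') - cm Λm (cm (cm (χm x) D') D) =
      (2 : ℝ) • (s * pd (1, 0) ψm x)) ∧
    -- [δ₋½(D̄), δ₋½(D̄')] = 2(ε̄·ε̄')∂₋ on ψ₋ and on ψ₊
    (∀ x, cm (par (pd (0, 1) (fun y => cm (χp y) Db) x)) Db' -
        cm (par (pd (0, 1) (fun y => cm (χp y) Db') x)) Db =
      (2 : ℝ) • (sb * pd (0, 1) ψm x)) ∧
    (∀ x, cm Λp (cm (-cm (χp x) Db) Db') - cm Λp (cm (-cm (χp x) Db') Db) =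
      (2 : ℝ) • (sb * pd (0, 1) ψp x)) ∧
    -- [δ₊½(D), δ₋½(D̄)] = δ_H, the gauge transformation with parameter ω = [D, D̄]
    (∀ x, cm Λp (cm (cm (χm x) D) Db) -
        cm (par (pd (1, 0) (fun y => -cm (χp y) Db) x)) D =
      cm ω (ψp x)) ∧
    (∀ x, -cm (par (pd (0, 1) (fun y => cm (χm y) D) x)) Db -
        cm Λm (cm (-cm (χp x) Db) D) =
      cm ω (ψm x)) :=
  stmt_17_general R par Λp Λm D D' Db Db' s sb ω hs hsb hDD' hDbDb' hω hk1 hk3 hk5 hk7 ψp ψm χm χp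
    hdχm hdχp hψp hψm heom1 heom2 heom3 heom4 hpar

end Stmt17
end
end
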